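/- arXiv:2602.01629 — 2 statements merged into one kernel-verified Lean document; each statement's English description precedes it below -/
import Mathlib

section
/- Consider the ACI update $\alpha_{t+1} = \alpha_t + \gamma(\alpha - \mathrm{err}_t)$ with $\gamma > 0$, $\alpha \in (0,1)$, $\mathrm{err}_t \in \{0,1\}$, and iterates bounded: $\alpha_t \in [m, M]$ for all $t$. Then for any $T \ge 1$, $\left| \frac{1}{T} \sum_{t=1}^T \mathrm{err}_t - \alpha \right| \le \frac{M - m}{T \gamma}$. -/
/-- Finite-sample coverage calibration of ACI: telescoping the update
`α_{t+1} = α_t + γ(α - err_t)` with iterates in `[m, M]` gives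
`|T⁻¹ ∑_{t=1}^T err_t - α| ≤ (M - m)/(T γ)`. -/
theorem aci_coverage_bound
    (γ : ℝ) (hγ : 0 < γ) (α m M : ℝ) (hα : α ∈ Set.Ioo (0:ℝ) 1)
    (a err : ℕ → ℝ)
    (herr01 : ∀ t, err t = 0 ∨ err t = 1)
    (hupd : ∀ t, a (t + 1) = a t + γ * (α - err t))
    (hbdd : ∀ t, a t ∈ Set.Icc m M)
    (T : ℕ) (hT : 1 ≤ T) :
    |(1 / (T : ℝ)) * (∑ t ∈ Finset.Icc 1 T, err t) - α| ≤ (M - m) / ((T : ℝ) * γ) := by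
  have htel : ∀ n : ℕ, a (n + 1) = a 1 + γ * ∑ t ∈ Finset.Icc 1 n, (α - err t) := by
    intro n
    induction n with
    | zero => simp
    | succ k ih =>
      rw [hupd (k + 1), ih, Finset.sum_Icc_succ_top (by omega : 1 ≤ k + 1)]
      ring
  have hT0 : (0:ℝ) < T := by exact_mod_cast hT
  have key : |∑ t ∈ Finset.Icc 1 T, (α - err t)| ≤ (M - m) / γ := by
    have h := htel T
    have h1 := hbdd 1
    have h2 := hbdd (T + 1)
    have : γ * ∑ t ∈ Finset.Icc 1 T, (α - err t) = a (T + 1) - a 1 := by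
      rw [h]; ring
    have habs : |γ * ∑ t ∈ Finset.Icc 1 T, (α - err t)| ≤ M - m := by
      rw [this, abs_le]
      constructor <;> simp at h1 h2 <;> nlinarith [h1.1, h1.2, h2.1, h2.2]
    rw [abs_mul, abs_of_pos hγ] at habs
    rw [le_div_iff₀ hγ]
    linarith
  have hsum : ∑ t ∈ Finset.Icc 1 T, (α - err t)
      = (T : ℝ) * α - ∑ t ∈ Finset.Icc 1 T, err t := by
    rw [Finset.sum_sub_distrib, Finset.sum_const, Nat.card_Icc]
    simp [mul_comm]
  have heq : 1 / (T : ℝ) * ∑ t ∈ Finset.Icc 1 T, err t - α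
      = -(((T : ℝ) * α - ∑ t ∈ Finset.Icc 1 T, err t) / T) := by
    field_simp
    ring
  rw [heq, abs_neg, abs_div, abs_of_pos hT0, ← hsum]
  rw [div_le_div_iff₀ hT0 (by positivity)]
  calc |∑ t ∈ Finset.Icc 1 T, (α - err t)| * ((T:ℝ) * γ)
      ≤ ((M - m) / γ) * ((T:ℝ) * γ) := by
        apply mul_le_mul_of_nonneg_right key (by positivity)
    _ = (M - m) * T := by field_simp
end

section
/- Consider the ACI update $\alpha_{t+1} = \alpha_t + \gamma(\alpha - \mathrm{err}_t)$ with iterates bounded in $[m, M]$ for all $t$. Then $\lim_{T \to \infty} \frac{1}{T} \sum_{t=1}^T \mathrm{err}_t = \alpha$. -/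
open Filter

/-- Long-term coverage of ACI: with the update `α_{t+1} = α_t + γ(α - err_t)`
and iterates bounded in `[m, M]`, the long-run error frequency converges to
the target `α`. -/
theorem aci_longterm_coverage
    (γ : ℝ) (hγ : 0 < γ) (α m M : ℝ) (hα : α ∈ Set.Ioo (0:ℝ) 1)
    (a err : ℕ → ℝ)
    (herr01 : ∀ t, err t = 0 ∨ err t = 1)
    (hupd : ∀ t, a (t + 1) = a t + γ * (α - err t))
    (hbdd : ∀ t, a t ∈ Set.Icc m M) :
    Tendsto (fun T : ℕ => (1 / (T : ℝ)) * ∑ t ∈ Finset.Icc 1 T, err t)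
      atTop (nhds α) := by
  have htel : ∀ T : ℕ, a (T + 1) = a 1 + ∑ t ∈ Finset.Icc 1 T, γ * (α - err t) := by
    intro T
    induction T with
    | zero => simp
    | succ n ih =>
      rw [Finset.sum_Icc_succ_top (by omega : 1 ≤ n + 1), hupd (n + 1), ih]
      ring
  have hsum : ∀ T : ℕ, ∑ t ∈ Finset.Icc 1 T, err t
      = α * T - (a (T + 1) - a 1) / γ := by
    intro T
    have h := htel T
    have h2 : ∑ t ∈ Finset.Icc 1 T, γ * (α - err t)
        = γ * α * T - γ * ∑ t ∈ Finset.Icc 1 T, err t := by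
      simp only [mul_sub, Finset.sum_sub_distrib, ← Finset.mul_sum]
      simp [Nat.card_Icc]
      ring
    rw [h2] at h
    field_simp
    linarith
  have hzero : Tendsto (fun T : ℕ => (a (T + 1) - a 1) / γ * (1 / (T : ℝ)))
      atTop (nhds 0) := by
    apply squeeze_zero_norm (a := fun T : ℕ => (M - m) / γ * (1 / (T : ℝ)))
    · intro T
      rw [norm_mul]
      have h1 : |a (T + 1) - a 1| ≤ M - m := by
        have hb1 := hbdd (T + 1); have hb2 := hbdd 1
        simp only [Set.mem_Icc] at hb1 hb2
        rw [abs_le]; constructor <;> linarith [hb1.1, hb1.2, hb2.1, hb2.2]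
      have h2 : ‖(a (T + 1) - a 1) / γ‖ ≤ (M - m) / γ := by
        rw [Real.norm_eq_abs, abs_div, abs_of_pos hγ]
        exact div_le_div_of_nonneg_right h1 hγ.le
      have h3 : (0:ℝ) ≤ ‖(1 : ℝ) / (T : ℝ)‖ := norm_nonneg _
      calc ‖(a (T + 1) - a 1) / γ‖ * ‖(1:ℝ) / (T : ℝ)‖
          ≤ (M - m) / γ * ‖(1:ℝ) / (T : ℝ)‖ := mul_le_mul_of_nonneg_right h2 h3
        _ = (M - m) / γ * (1 / (T : ℝ)) := by
            congr 1
            rw [Real.norm_eq_abs, abs_of_nonneg (by positivity)]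
    · simpa using tendsto_one_div_atTop_nhds_zero_nat.const_mul ((M - m) / γ)
  have hfinal : Tendsto (fun T : ℕ => α - (a (T + 1) - a 1) / γ * (1 / (T : ℝ)))
      atTop (nhds α) := by
    simpa using (tendsto_const_nhds (x := α)).sub hzero
  apply hfinal.congr'
  filter_upwards [eventually_ge_atTop 1] with T hT
  have hT0 : (T : ℝ) ≠ 0 := by
    simp only [ne_eq, Nat.cast_eq_zero]; omega
  rw [hsum T]
  field_simp
end
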